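/- arXiv:1810.10397 — 7 statements merged into one kernel-verified Lean document; each statement's English description precedes it below -/
import Mathlib

section
/- Let F be a field of characteristic ≠ 2 and let A1 = B1 = E12 + E23 (the 3×3 matrix with 1 in positions (1,2) and (2,3)), A2 = E32, B2 = E12. Then for each i the pairs (A1,A2) and (B1,B2) have equal values of tr(Xi), σ2(Xi), det(Xi) (i=1,2), tr(X1²X2), tr(X1X2²), tr(X1²X2²), tr(X1²X2²X1X2), but tr(A1A2) ≠ tr(B1B2). -/
/-- Sum of the principal 2×2 minors of a 3×3 matrix (second coefficient of the
characteristic polynomial). -/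
def sigma2 {R : Type*} [CommRing R] (A : Matrix (Fin 3) (Fin 3) R) : R :=
  (A 0 0 * A 1 1 - A 0 1 * A 1 0) + (A 0 0 * A 2 2 - A 0 2 * A 2 0) +
    (A 1 1 * A 2 2 - A 1 2 * A 2 1)

/-!
Both pairs have the same nilpotent Jordan block `J = E₁₂ + E₂₃` as first matrix, and the second
matrices `E₃₂`, `E₁₂` are square-zero, so every listed invariant involving `X₂²` vanishes for
both pairs; the remaining ones vanish because `E₃₂`, `E₁₂` and `J² E₃₂ = E₁₂` have zero
diagonal. The pairs are told apart by `J E₃₂ = E₂₂` versus `J E₁₂ = 0`.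
-/

namespace Matrix

variable {R : Type*} [Semiring R]

theorem jordan_three_sq :
    (!![0, 1, 0; 0, 0, 1; 0, 0, 0] : Matrix (Fin 3) (Fin 3) R) ^ 2 = !![0, 0, 1; 0, 0, 0; 0, 0, 0] := by
  rw [sq, mul_fin_three]; simp

theorem jordan_three_mul_e32 :
    (!![0, 1, 0; 0, 0, 1; 0, 0, 0] : Matrix (Fin 3) (Fin 3) R) * !![0, 0, 0; 0, 0, 0; 0, 1, 0] =
      !![0, 0, 0; 0, 1, 0; 0, 0, 0] := by
  rw [mul_fin_three]; simp

theorem jordan_three_mul_e12 :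
    (!![0, 1, 0; 0, 0, 1; 0, 0, 0] : Matrix (Fin 3) (Fin 3) R) * !![0, 1, 0; 0, 0, 0; 0, 0, 0] = 0 := by
  rw [mul_fin_three]; ext i j; fin_cases i <;> fin_cases j <;> simp

theorem e32_sq : (!![0, 0, 0; 0, 0, 0; 0, 1, 0] : Matrix (Fin 3) (Fin 3) R) ^ 2 = 0 := by
  rw [sq, mul_fin_three]; ext i j; fin_cases i <;> fin_cases j <;> simp

theorem e12_sq : (!![0, 1, 0; 0, 0, 0; 0, 0, 0] : Matrix (Fin 3) (Fin 3) R) ^ 2 = 0 := by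
  rw [sq, mul_fin_three]; ext i j; fin_cases i <;> fin_cases j <;> simp

end Matrix

open Matrix in
theorem stmt_2_general (F : Type*) [Field F]
    (A1 A2 B1 B2 : Matrix (Fin 3) (Fin 3) F)
    (hA1 : A1 = !![0, 1, 0; 0, 0, 1; 0, 0, 0])
    (hB1 : B1 = !![0, 1, 0; 0, 0, 1; 0, 0, 0])
    (hA2 : A2 = !![0, 0, 0; 0, 0, 0; 0, 1, 0])
    (hB2 : B2 = !![0, 1, 0; 0, 0, 0; 0, 0, 0]) :
    A1.trace = B1.trace ∧ A2.trace = B2.trace ∧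
    sigma2 A1 = sigma2 B1 ∧ sigma2 A2 = sigma2 B2 ∧
    A1.det = B1.det ∧ A2.det = B2.det ∧
    (A1 ^ 2 * A2).trace = (B1 ^ 2 * B2).trace ∧
    (A1 * A2 ^ 2).trace = (B1 * B2 ^ 2).trace ∧
    (A1 ^ 2 * A2 ^ 2).trace = (B1 ^ 2 * B2 ^ 2).trace ∧
    (A1 ^ 2 * A2 ^ 2 * A1 * A2).trace = (B1 ^ 2 * B2 ^ 2 * B1 * B2).trace ∧
    (A1 * A2).trace ≠ (B1 * B2).trace := by
  subst hA1 hB1 hA2 hB2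
  rw [jordan_three_sq, jordan_three_mul_e32, jordan_three_mul_e12, e32_sq, e12_sq]
  simp [trace_fin_three, det_fin_three, sigma2]

theorem stmt_2 (F : Type*) [Field F] (hchar : ringChar F ≠ 2)
    (A1 A2 B1 B2 : Matrix (Fin 3) (Fin 3) F)
    (hA1 : A1 = !![0, 1, 0; 0, 0, 1; 0, 0, 0])
    (hB1 : B1 = !![0, 1, 0; 0, 0, 1; 0, 0, 0])
    (hA2 : A2 = !![0, 0, 0; 0, 0, 0; 0, 1, 0])
    (hB2 : B2 = !![0, 1, 0; 0, 0, 0; 0, 0, 0]) :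
    A1.trace = B1.trace ∧ A2.trace = B2.trace ∧
    sigma2 A1 = sigma2 B1 ∧ sigma2 A2 = sigma2 B2 ∧
    A1.det = B1.det ∧ A2.det = B2.det ∧
    (A1 ^ 2 * A2).trace = (B1 ^ 2 * B2).trace ∧
    (A1 * A2 ^ 2).trace = (B1 * B2 ^ 2).trace ∧
    (A1 ^ 2 * A2 ^ 2).trace = (B1 ^ 2 * B2 ^ 2).trace ∧
    (A1 ^ 2 * A2 ^ 2 * A1 * A2).trace = (B1 ^ 2 * B2 ^ 2 * B1 * B2).trace ∧
    (A1 * A2).trace ≠ (B1 * B2).trace :=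
  stmt_2_general F A1 A2 B1 B2 hA1 hB1 hA2 hB2
end

section
/- Let F be a field of characteristic ≠ 2. Set A1 = B1 = E12 + E23, A2 = [[0,1,0],[0,-1,0],[1,1,1]], B2 = [[0,1,0],[1,0,0],[1,0,0]]. Then (A1,A2) and (B1,B2) agree on tr(Xi), σ2(Xi), det(Xi) for i=1,2, tr(X1X2), tr(X1²X2), tr(X1X2²), and tr(X1²X2²X1X2), but tr(A1²A2²) ≠ tr(B1²B2²). -/
section
variable {R : Type*} [CommRing R]

theorem trace_shift_mul (M : Matrix (Fin 3) (Fin 3) R) :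
    (!![0, 1, 0; 0, 0, 1; 0, 0, 0] * M).trace = M 1 0 + M 2 1 := by
  simp [Matrix.trace_fin_three, Matrix.vecMul, dotProduct, Fin.sum_univ_three]

theorem shift_sq :
    (!![0, 1, 0; 0, 0, 1; 0, 0, 0] : Matrix (Fin 3) (Fin 3) R) ^ 2 =
      !![0, 0, 1; 0, 0, 0; 0, 0, 0] := by
  ext i j
  fin_cases i <;> fin_cases j <;> simp [sq, Matrix.mul_apply, Fin.sum_univ_three]

theorem trace_shift_sq_mul (M : Matrix (Fin 3) (Fin 3) R) :
    ((!![0, 1, 0; 0, 0, 1; 0, 0, 0] : Matrix (Fin 3) (Fin 3) R) ^ 2 * M).trace = M 2 0 := by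
  simp [shift_sq, Matrix.trace_fin_three, Matrix.vecMul, dotProduct, Fin.sum_univ_three]

end

theorem stmt_4_general (F : Type*) [Field F]
    (A1 A2 B1 B2 : Matrix (Fin 3) (Fin 3) F)
    (hA1 : A1 = !![0, 1, 0; 0, 0, 1; 0, 0, 0])
    (hB1 : B1 = !![0, 1, 0; 0, 0, 1; 0, 0, 0])
    (hA2 : A2 = !![0, 1, 0; 0, -1, 0; 1, 1, 1])
    (hB2 : B2 = !![0, 1, 0; 1, 0, 0; 1, 0, 0]) :
    A1.trace = B1.trace ∧ A2.trace = B2.trace ∧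
    sigma2 A1 = sigma2 B1 ∧ sigma2 A2 = sigma2 B2 ∧
    A1.det = B1.det ∧ A2.det = B2.det ∧
    (A1 * A2).trace = (B1 * B2).trace ∧
    (A1 ^ 2 * A2).trace = (B1 ^ 2 * B2).trace ∧
    (A1 * A2 ^ 2).trace = (B1 * B2 ^ 2).trace ∧
    (A1 ^ 2 * A2 ^ 2 * A1 * A2).trace = (B1 ^ 2 * B2 ^ 2 * B1 * B2).trace ∧
    (A1 ^ 2 * A2 ^ 2).trace ≠ (B1 ^ 2 * B2 ^ 2).trace := by
  have hA2sq : A2 ^ 2 = !![0, -1, 0; 0, 1, 0; 1, 1, 1] := by subst hA2; simp [sq]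
  have hB2sq : B2 ^ 2 = !![1, 0, 0; 0, 1, 0; 0, 1, 0] := by subst hB2; simp [sq]
  subst hA1 hB1
  simp only [mul_assoc, trace_shift_mul, trace_shift_sq_mul, hA2sq, hB2sq]
  subst hA2 hB2
  simp [sigma2, Matrix.trace_fin_three, Matrix.det_fin_three, Matrix.mul_apply, Fin.sum_univ_three]

theorem stmt_4 (F : Type*) [Field F] (hchar : ringChar F ≠ 2)
    (A1 A2 B1 B2 : Matrix (Fin 3) (Fin 3) F)
    (hA1 : A1 = !![0, 1, 0; 0, 0, 1; 0, 0, 0])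
    (hB1 : B1 = !![0, 1, 0; 0, 0, 1; 0, 0, 0])
    (hA2 : A2 = !![0, 1, 0; 0, -1, 0; 1, 1, 1])
    (hB2 : B2 = !![0, 1, 0; 1, 0, 0; 1, 0, 0]) :
    A1.trace = B1.trace ∧ A2.trace = B2.trace ∧
    sigma2 A1 = sigma2 B1 ∧ sigma2 A2 = sigma2 B2 ∧
    A1.det = B1.det ∧ A2.det = B2.det ∧
    (A1 * A2).trace = (B1 * B2).trace ∧
    (A1 ^ 2 * A2).trace = (B1 ^ 2 * B2).trace ∧
    (A1 * A2 ^ 2).trace = (B1 * B2 ^ 2).trace ∧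
    (A1 ^ 2 * A2 ^ 2 * A1 * A2).trace = (B1 ^ 2 * B2 ^ 2 * B1 * B2).trace ∧
    (A1 ^ 2 * A2 ^ 2).trace ≠ (B1 ^ 2 * B2 ^ 2).trace :=
  stmt_4_general F A1 A2 B1 B2 hA1 hB1 hA2 hB2
end

section
/- Let F be a field of characteristic ≠ 2. Set A1 = [[0,1,0],[1,0,0],[0,0,0]], A2 = B1 = [[0,0,0],[0,0,1],[0,1,0]], B2 = [[0,0,0],[0,1,0],[0,0,-1]]. Then (A1,A2) and (B1,B2) agree on tr(Yi), σ2(Yi), det(Yi) (i=1,2), tr(Y1Y2), tr(Y1²Y2), tr(Y1Y2²), but tr(A1²A2²) ≠ tr(B1²B2²). -/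
theorem stmt_14 (F : Type*) [Field F] (hchar : ringChar F ≠ 2)
    (A1 A2 B1 B2 : Matrix (Fin 3) (Fin 3) F)
    (hA1 : A1 = !![0, 1, 0; 1, 0, 0; 0, 0, 0])
    (hA2 : A2 = !![0, 0, 0; 0, 0, 1; 0, 1, 0])
    (hB1 : B1 = !![0, 0, 0; 0, 0, 1; 0, 1, 0])
    (hB2 : B2 = !![0, 0, 0; 0, 1, 0; 0, 0, -1]) :
    A1.trace = B1.trace ∧ A2.trace = B2.trace ∧
    sigma2 A1 = sigma2 B1 ∧ sigma2 A2 = sigma2 B2 ∧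
    A1.det = B1.det ∧ A2.det = B2.det ∧
    (A1 * A2).trace = (B1 * B2).trace ∧
    (A1 ^ 2 * A2).trace = (B1 ^ 2 * B2).trace ∧
    (A1 * A2 ^ 2).trace = (B1 * B2 ^ 2).trace ∧
    (A1 ^ 2 * A2 ^ 2).trace ≠ (B1 ^ 2 * B2 ^ 2).trace := by
  subst hA1 hA2 hB1 hB2
  norm_num [sigma2, Matrix.trace_fin_three, Matrix.det_fin_three, pow_two,
    Matrix.mul_fin_three, Matrix.vecHead, Matrix.vecTail, Matrix.cons_val_two]
  intro h; exact one_ne_zero (by linear_combination -h : (1:F) = 0)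
end

section
/- Over a commutative ring in which 2 is invertible (or a field of characteristic ≠ 2), for 3×3 symmetric matrices, the invariant tr(Y1² Y2^i Y1 Y3^j) for i,j ∈ {1,2} is decomposable: it equals −tr(Y1² Y2^i Y1 Y3^j) modulo products of invariants of lower degree, hence tr(Y1² Y2^i Y1 Y3^j) ≡ 0 modulo decomposable invariants. In particular, there is an identity expressing 2·tr(Y1² Y2^i Y1 Y3^j) as a polynomial in traces and σ-functions of monomials of strictly smaller degree. -/
open MvPolynomial

/-- The generic 3×3 symmetric matrix `Y k` (k-th of three), with entries the
polynomial variables `X (k, i, j)` for `i ≤ j`, symmetrized. -/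
noncomputable def genSym (F : Type*) [Field F] (k : Fin 3) :
    Matrix (Fin 3) (Fin 3) (MvPolynomial (Fin 3 × Fin 3 × Fin 3) F) :=
  Matrix.of fun i j => if i ≤ j then X (k, i, j) else X (k, j, i)

/-- The product `Y_{w₁} Y_{w₂} ⋯` of generic symmetric matrices along a word `w`. -/
noncomputable def wordProd (F : Type*) [Field F] (w : List (Fin 3)) :
    Matrix (Fin 3) (Fin 3) (MvPolynomial (Fin 3 × Fin 3 × Fin 3) F) :=
  (w.map (genSym F)).prod

/-- The `t`-th coefficient `σ_t` of the characteristic polynomial applied to the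
monomial in generic symmetric matrices given by the word `w`. -/
noncomputable def sigmaWord (F : Type*) [Field F] (t : ℕ) (w : List (Fin 3)) :
    MvPolynomial (Fin 3 × Fin 3 × Fin 3) F :=
  if t = 1 then (wordProd F w).trace
  else if t = 2 then sigma2 (wordProd F w)
  else (wordProd F w).det

/-!
For symmetric `3 × 3` matrices `A, B, C`, the polarized Cayley–Hamilton identity together with
`tr Mᵀ = tr M` gives `tr(A²BAC) ≡ -tr(A²BAC)` modulo products of traces and `σ`-values of shorter
words; since `2` is invertible, `tr(A²BAC)` is decomposable. Here `A = Y₁`, `B = Y₂ⁱ`, `C = Y₃ʲ`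
are symmetric because their words are palindromes.
-/

theorem Matrix.two_mul_trace_sq_mul_mul_mul_of_isSymm {R : Type*} [CommRing R]
    {A B C : Matrix (Fin 3) (Fin 3) R} (hA : A.IsSymm) (hB : B.IsSymm) (hC : C.IsSymm) :
    2 * (A ^ 2 * B * A * C).trace =
      B.trace * (A * A * A * C).trace + A.trace * (A * B * A * C).trace
      - A.trace * B.trace * (A * A * C).trace + (A * B).trace * (A * A * C).trace
      + (A * A * B).trace * (A * C).trace - A.trace * (A * B).trace * (A * C).trace
      + sigma2 A * B.trace * (A * C).trace - A.det * (B * C).trace := by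
  simp only [sq, Matrix.trace_fin_three, Matrix.det_fin_three, Matrix.mul_apply,
    Fin.sum_univ_three, sigma2, hA.apply 0 1, hA.apply 0 2, hA.apply 1 2, hB.apply 0 1, hB.apply 0 2, hB.apply 1 2,
    hC.apply 0 1, hC.apply 0 2, hC.apply 1 2]
  ring

theorem Subalgebra.mem_of_two_mul_mem {F A : Type*} [Field F] [Ring A] [Algebra F A]
    (S : Subalgebra F A) (h2 : (2 : F) ≠ 0) {p : A} (hp : 2 * p ∈ S) : p ∈ S := by
  rw [← inv_smul_smul₀ h2 p, two_smul, ← two_mul]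
  exact S.smul_mem hp _

section

variable (F : Type*) [Field F]

theorem genSym_isSymm (k : Fin 3) : (genSym F k).IsSymm := by
  ext i j
  simp only [Matrix.transpose_apply, genSym, Matrix.of_apply]
  rcases lt_trichotomy i j with h | rfl | h
  · rw [if_neg h.not_ge, if_pos h.le]
  · rfl
  · rw [if_pos h.le, if_neg h.not_ge]

theorem wordProd_append (u v : List (Fin 3)) :
    wordProd F (u ++ v) = wordProd F u * wordProd F v := by
  simp [wordProd]

theorem wordProd_reverse (w : List (Fin 3)) :
    wordProd F w.reverse = (wordProd F w).transpose := by
  simp only [wordProd, Matrix.transpose_list_prod, List.map_reverse, List.map_map]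
  congr 2
  exact List.map_congr_left fun k _ => (genSym_isSymm F k).symm

theorem wordProd_isSymm_of_palindrome {w : List (Fin 3)} (hw : w.Palindrome) :
    (wordProd F w).IsSymm := by
  rw [Matrix.IsSymm, ← wordProd_reverse, hw.reverse_eq]

noncomputable def lowDegreeInvariants (d : ℕ) :
    Subalgebra F (MvPolynomial (Fin 3 × Fin 3 × Fin 3) F) :=
  Algebra.adjoin F
    { p | ∃ t ∈ ({1, 2, 3} : Set ℕ), ∃ w : List (Fin 3),
        w ≠ [] ∧ t * w.length < d ∧ p = sigmaWord F t w }

section lowDegreeInvariants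

variable {F} {d : ℕ} {w : List (Fin 3)}

theorem trace_wordProd_mem (hw : w ≠ []) (hd : w.length < d) :
    (wordProd F w).trace ∈ lowDegreeInvariants F d :=
  Algebra.subset_adjoin ⟨1, by simp, w, hw, by simpa using hd, by simp [sigmaWord]⟩

theorem sigma2_wordProd_mem (hw : w ≠ []) (hd : 2 * w.length < d) :
    sigma2 (wordProd F w) ∈ lowDegreeInvariants F d :=
  Algebra.subset_adjoin ⟨2, by simp, w, hw, hd, by simp [sigmaWord]⟩

theorem det_wordProd_mem (hw : w ≠ []) (hd : 3 * w.length < d) :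
    (wordProd F w).det ∈ lowDegreeInvariants F d :=
  Algebra.subset_adjoin ⟨3, by simp, w, hw, hd, by simp [sigmaWord]⟩

end lowDegreeInvariants

theorem trace_sq_mul_mul_mul_mem_lowDegreeInvariants (h2 : (2 : F) ≠ 0)
    {a b c : List (Fin 3)} (ha : a.Palindrome) (hb : b.Palindrome) (hc : c.Palindrome)
    (ha₀ : a ≠ []) (hb₀ : b ≠ []) (hc₀ : c ≠ []) :
    (wordProd F a ^ 2 * wordProd F b * wordProd F a * wordProd F c).trace ∈
      lowDegreeInvariants F (3 * a.length + b.length + c.length) := by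
  apply Subalgebra.mem_of_two_mul_mem _ h2
  rw [Matrix.two_mul_trace_sq_mul_mul_mul_of_isSymm (wordProd_isSymm_of_palindrome F ha)
    (wordProd_isSymm_of_palindrome F hb) (wordProd_isSymm_of_palindrome F hc)]
  simp only [← wordProd_append]
  repeat' first
    | with_reducible apply trace_wordProd_mem | with_reducible apply sigma2_wordProd_mem
    | with_reducible apply det_wordProd_mem
    | with_reducible apply sub_mem | with_reducible apply add_mem | with_reducible apply mul_mem
  all_goals
    simp only [← List.length_pos_iff, List.length_append] at ha₀ hb₀ hc₀ ⊢
    omega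

end

/-- `tr(Y₁² Y₂^i Y₁ Y₃^j)` for `i, j ∈ {1, 2}` is decomposable: it lies in the
subalgebra generated by the invariants `σ_t(b)` of strictly
lower degree (its degree being `3 + i + j`). -/
theorem stmt_15 (F : Type*) [Field F] (hchar : ringChar F ≠ 2)
    (i j : ℕ) (hi : i = 1 ∨ i = 2) (hj : j = 1 ∨ j = 2) :
    ((genSym F 0) ^ 2 * (genSym F 1) ^ i * genSym F 0 * (genSym F 2) ^ j).trace ∈
      Algebra.adjoin F
        { p : MvPolynomial (Fin 3 × Fin 3 × Fin 3) F |
          ∃ t ∈ ({1, 2, 3} : Set ℕ), ∃ w : List (Fin 3),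
            w ≠ [] ∧ t * w.length < 3 + i + j ∧ p = sigmaWord F t w } := by
  show _ ∈ lowDegreeInvariants F (3 + i + j)
  have hrep (n : ℕ) (k : Fin 3) : (List.replicate n k).Palindrome :=
    .of_reverse_eq List.reverse_replicate
  have h := trace_sq_mul_mul_mul_mem_lowDegreeInvariants F (Ring.two_ne_zero hchar)
    (.singleton 0) (hrep i 1) (hrep j 2) (List.cons_ne_nil 0 [])
    (by rcases hi with rfl | rfl <;> simp) (by rcases hj with rfl | rfl <;> simp)
  simpa [wordProd, List.map_replicate] using h
end

section
/- Let F be an algebraically closed field of characteristic ≠ 2. Define symmetric nilpotent 3×3 matrices T1 = [[1,i,0],[i,-1,0],[0,0,0]], T2 = [[1,-i,0],[-i,-1,0],[0,0,0]], T3 = [[1,0,i],[0,0,0],[i,0,-1]], R1 = [[0,1,0],[1,0,i],[0,i,0]], R2 = [[1,1,0],[1,-3,2i√2],[0,2i√2,2]], where i² = -1 and (√2)² = 2. Then there exist no α, β, γ ∈ F such that tr(A1²A2²A3) = α tr(A1A2)tr(A1A2A3) + β tr(A1A3)tr(A1A2²) + γ tr(A2A3)tr(A1²A2) holds for all of the four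 triples (A1,A2,A3) ∈ {(T1,T2,T3), (T1,R1,T2), (R1,T1,T2), (R1,R2,T1)}. -/
theorem stmt_16 (F : Type*) [Field F] [IsAlgClosed F] (hchar : ringChar F ≠ 2)
    (i s : F) (hi : i ^ 2 = -1) (hs : s ^ 2 = 2)
    (T1 T2 T3 R1 R2 : Matrix (Fin 3) (Fin 3) F)
    (hT1 : T1 = !![1, i, 0; i, -1, 0; 0, 0, 0])
    (hT2 : T2 = !![1, -i, 0; -i, -1, 0; 0, 0, 0])
    (hT3 : T3 = !![1, 0, i; 0, 0, 0; i, 0, -1])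
    (hR1 : R1 = !![0, 1, 0; 1, 0, i; 0, i, 0])
    (hR2 : R2 = !![1, 1, 0; 1, -3, 2 * i * s; 0, 2 * i * s, 2]) :
    ¬ ∃ α β γ : F, ∀ A1 A2 A3 : Matrix (Fin 3) (Fin 3) F,
      ((A1, A2, A3) = (T1, T2, T3) ∨ (A1, A2, A3) = (T1, R1, T2) ∨
        (A1, A2, A3) = (R1, T1, T2) ∨ (A1, A2, A3) = (R1, R2, T1)) →
      (A1 ^ 2 * A2 ^ 2 * A3).trace =
        α * (A1 * A2).trace * (A1 * A2 * A3).trace +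
        β * (A1 * A3).trace * (A1 * A2 ^ 2).trace +
        γ * (A2 * A3).trace * (A1 ^ 2 * A2).trace := by
  have h2 : (2 : F) ≠ 0 := Ring.two_ne_zero hchar
  rintro ⟨α, β, γ, h⟩
  subst hT1 hT2 hT3 hR1 hR2
  have e1 := h _ _ _ (Or.inl rfl)
  have e2 := h _ _ _ (Or.inr (Or.inl rfl))
  have e3 := h _ _ _ (Or.inr (Or.inr (Or.inl rfl)))
  have e4 := h _ _ _ (Or.inr (Or.inr (Or.inr rfl)))
  simp only [pow_two, Matrix.mul_fin_three, Matrix.trace_fin_three_of] at e1 e2 e3 e4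
  have hi3 : i ^ 3 = -i := by linear_combination i * hi
  have hi4 : i ^ 4 = 1 := by linear_combination (i ^ 2 - 1) * hi
  ring_nf at e1 e2 e3 e4
  rw [hi4, hi3, hi, hs] at e4
  rw [hi4, hi] at e1
  rw [hi4, hi] at e2
  rw [hi4, hi] at e3
  ring_nf at e1 e2 e3 e4
  have h4 : (4 : F) ≠ 0 := by have := pow_ne_zero 2 h2; norm_num at this; exact this
  have h8 : (8 : F) ≠ 0 := by have := pow_ne_zero 3 h2; norm_num at this; exact this
  have hα : α = 0 := by rcases mul_eq_zero.mp e1.symm with h | h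
                        exacts [h, absurd h h8]
  have hβ : β = 0 := by rcases mul_eq_zero.mp e2.symm with h | h
                        exacts [h, absurd h h4]
  have hγ : γ = 0 := by rcases mul_eq_zero.mp e3.symm with h | h
                        exacts [h, absurd h h4]
  rw [hα, hβ, hγ] at e4
  have key : (1 - i) * (1 - s) = 0 := by
    apply mul_left_cancel₀ h2
    linear_combination e4
  rcases mul_eq_zero.mp key with h | h
  · exact h2 (by linear_combination hi + (1 + i) * h)
  · exact one_ne_zero (α := F) (by linear_combination -hs - (1 + s) * h)
end

section
/- Let F be an algebraically closed field of characteristic 3. With the nilpotent symmetric 3×3 matrices T1, T2, T3, R1, R2, R3 defined by T1 = [[1,i,0],[i,-1,0],[0,0,0]], T2 = [[1,-i,0],[-i,-1,0],[0,0,0]], T3 = [[1,0,i],[0,0,0],[i,0,-1]], R1 = [[0,1,0],[1,0,i],[0,i,0]], R2 = [[1,1,0],[1,-3,2i√2],[0,2i√2,2]], R3 = [[0,-1,0],[-1,0,i],[0,i,0]] (i² = -1, (√2)² = 2), there exist no α1,α2,α3,β1,β2,β3,γ,δ ∈ F such that tr(A1²A2²A3²) = α1 tr(A1²A2A3)tr(A2A3)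 + α2 tr(A2²A1A3)tr(A1A3) + α3 tr(A3²A1A2)tr(A1A2) + β1 tr(A1²A3)tr(A2²A3) + β2 tr(A1²A2)tr(A3²A2) + β3 tr(A2²A1)tr(A3²A1) + γ tr(A1A2A3)² + δ tr(A1A2)tr(A1A3)tr(A2A3) holds for all of the triples (T1,T2,T3), (R1,T1,T2), (T1,R1,T2), (T1,T2,R1), (R1,R2,T1), (R1,T1,R2), (T1,R1,R2), (R1,R2,R3). (The constraints force 6γ = −1, impossible when char F = 3.) -/
set_option maxHeartbeats 4000000 in
set_option maxRecDepth 8000 in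
theorem stmt_17 (F : Type*) [Field F] [IsAlgClosed F] (hchar : ringChar F = 3)
    (i s : F) (hi : i ^ 2 = -1) (hs : s ^ 2 = 2)
    (T1 T2 T3 R1 R2 R3 : Matrix (Fin 3) (Fin 3) F)
    (hT1 : T1 = !![1, i, 0; i, -1, 0; 0, 0, 0])
    (hT2 : T2 = !![1, -i, 0; -i, -1, 0; 0, 0, 0])
    (hT3 : T3 = !![1, 0, i; 0, 0, 0; i, 0, -1])
    (hR1 : R1 = !![0, 1, 0; 1, 0, i; 0, i, 0])
    (hR2 : R2 = !![1, 1, 0; 1, -3, 2 * i * s; 0, 2 * i * s, 2])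
    (hR3 : R3 = !![0, -1, 0; -1, 0, i; 0, i, 0]) :
    ¬ ∃ α1 α2 α3 β1 β2 β3 γ δ : F, ∀ A1 A2 A3 : Matrix (Fin 3) (Fin 3) F,
      ((A1, A2, A3) = (T1, T2, T3) ∨ (A1, A2, A3) = (R1, T1, T2) ∨
        (A1, A2, A3) = (T1, R1, T2) ∨ (A1, A2, A3) = (T1, T2, R1) ∨
        (A1, A2, A3) = (R1, R2, T1) ∨ (A1, A2, A3) = (R1, T1, R2) ∨
        (A1, A2, A3) = (T1, R1, R2) ∨ (A1, A2, A3) = (R1, R2, R3)) →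
      (A1 ^ 2 * A2 ^ 2 * A3 ^ 2).trace =
        α1 * (A1 ^ 2 * A2 * A3).trace * (A2 * A3).trace +
        α2 * (A2 ^ 2 * A1 * A3).trace * (A1 * A3).trace +
        α3 * (A3 ^ 2 * A1 * A2).trace * (A1 * A2).trace +
        β1 * (A1 ^ 2 * A3).trace * (A2 ^ 2 * A3).trace +
        β2 * (A1 ^ 2 * A2).trace * (A3 ^ 2 * A2).trace +
        β3 * (A2 ^ 2 * A1).trace * (A3 ^ 2 * A1).trace +
        γ * (A1 * A2 * A3).trace ^ 2 +
        δ * (A1 * A2).trace * (A1 * A3).trace * (A2 * A3).trace := by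
  have h3 : (3:F) = 0 := by
    have := ringChar.Nat.cast_ringChar (R := F)
    rw [hchar] at this; exact_mod_cast this
  rintro ⟨α1, α2, α3, β1, β2, β3, γ, δ, h⟩
  subst hT1 hT2 hT3 hR1 hR2 hR3
  have sqT1 : (!![1, i, 0; i, -1, 0; 0, 0, 0] : Matrix (Fin 3) (Fin 3) F)^2 = 0 := by
    refine Matrix.ext fun a b => ?_
    fin_cases a <;> fin_cases b <;> simp [pow_two, Matrix.mul_apply, Fin.sum_univ_three, Matrix.vecHead, Matrix.vecTail] <;> first | ring1 | linear_combination ((1:F)) * hi | linear_combination ((-1:F)) * hi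
  have sqT2 : (!![1, -i, 0; -i, -1, 0; 0, 0, 0] : Matrix (Fin 3) (Fin 3) F)^2 = 0 := by
    refine Matrix.ext fun a b => ?_
    fin_cases a <;> fin_cases b <;> simp [pow_two, Matrix.mul_apply, Fin.sum_univ_three, Matrix.vecHead, Matrix.vecTail] <;> first | ring1 | linear_combination ((1:F)) * hi | linear_combination ((-1:F)) * hi
  have sqT3 : (!![1, 0, i; 0, 0, 0; i, 0, -1] : Matrix (Fin 3) (Fin 3) F)^2 = 0 := by
    refine Matrix.ext fun a b => ?_
    fin_cases a <;> fin_cases b <;> simp [pow_two, Matrix.mul_apply, Fin.sum_univ_three, Matrix.vecHead, Matrix.vecTail] <;> first | ring1 | linear_combination ((1:F)) * hi | linear_combination ((-1:F)) * hi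
  have sqR1 : (!![0, 1, 0; 1, 0, i; 0, i, 0] : Matrix (Fin 3) (Fin 3) F)^2 = !![1,0,i;0,0,0;i,0,2] := by
    refine Matrix.ext fun a b => ?_
    fin_cases a <;> fin_cases b <;> simp [pow_two, Matrix.mul_apply, Fin.sum_univ_three, Matrix.vecHead, Matrix.vecTail] <;> first | ring1 | linear_combination ((1:F)) * hi | linear_combination ((-1:F)) * hi | linear_combination ((1:F)) * hi + ((-1:F)) * h3 | linear_combination ((-1:F)) * hi + ((1:F)) * h3
  have sqR2 : (!![1, 1, 0; 1, -3, 2 * i * s; 0, 2 * i * s, 2] : Matrix (Fin 3) (Fin 3) F)^2 = !![2,1,2*i*s;1,2,i*s;2*i*s,i*s,2] := by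
    refine Matrix.ext fun a b => ?_
    fin_cases a <;> fin_cases b <;> simp [pow_two, Matrix.mul_apply, Fin.sum_univ_three, Matrix.vecHead, Matrix.vecTail] <;> first | ring1 | linear_combination ((-1:F)) * h3 | linear_combination ((1:F)) * h3 | linear_combination ((4)*s^2) * hi + ((-4:F)) * hs | linear_combination ((-4)*s^2) * hi + ((4:F)) * hs | linear_combination ((-1)*i*s) * h3 | linear_combination ((1)*i*s) * h3 | linear_combination ((4)*s^2) * hi + ((-4:F)) * hs + ((-2:F)) * h3 | linear_combination ((-4)*s^2) * hi + ((4:F)) * hs + ((2:F)) * h3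
  have sqR3 : (!![0, -1, 0; -1, 0, i; 0, i, 0] : Matrix (Fin 3) (Fin 3) F)^2 = !![1,0,2*i;0,0,0;2*i,0,2] := by
    refine Matrix.ext fun a b => ?_
    fin_cases a <;> fin_cases b <;> simp [pow_two, Matrix.mul_apply, Fin.sum_univ_three, Matrix.vecHead, Matrix.vecTail] <;> first | ring1 | linear_combination ((-1)*i) * h3 | linear_combination ((1)*i) * h3 | linear_combination ((1:F)) * hi | linear_combination ((-1:F)) * hi | linear_combination ((1:F)) * hi + ((-1:F)) * h3 | linear_combination ((-1:F)) * hi + ((1:F)) * h3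
  have t_T2_T3 : ((!![1, -i, 0; -i, -1, 0; 0, 0, 0] : Matrix (Fin 3) (Fin 3) F) * !![1, 0, i; 0, 0, 0; i, 0, -1]).trace = ((1:F)) := by
    simp [Matrix.trace_fin_three, Matrix.mul_apply, Fin.sum_univ_three, Matrix.vecHead, Matrix.vecTail] <;> (first | ring1 | ring_nf)
  have t_T1_T3 : ((!![1, i, 0; i, -1, 0; 0, 0, 0] : Matrix (Fin 3) (Fin 3) F) * !![1, 0, i; 0, 0, 0; i, 0, -1]).trace = ((1:F)) := by
    simp [Matrix.trace_fin_three, Matrix.mul_apply, Fin.sum_univ_three, Matrix.vecHead, Matrix.vecTail] <;> (first | ring1 | ring_nf)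
  have t_T1_T2 : ((!![1, i, 0; i, -1, 0; 0, 0, 0] : Matrix (Fin 3) (Fin 3) F) * !![1, -i, 0; -i, -1, 0; 0, 0, 0]).trace = ((1:F)) := by
    simp [Matrix.trace_fin_three, Matrix.mul_apply, Fin.sum_univ_three, Matrix.vecHead, Matrix.vecTail] <;> (first | ring1 | linear_combination ((-2:F)) * hi + ((1:F)) * h3 | linear_combination ((2:F)) * hi + ((-1:F)) * h3)
  have t_T1_T2_T3 : ((!![1, i, 0; i, -1, 0; 0, 0, 0] : Matrix (Fin 3) (Fin 3) F) * !![1, -i, 0; -i, -1, 0; 0, 0, 0] * !![1, 0, i; 0, 0, 0; i, 0, -1]).trace = ((2:F)) := by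
    simp [Matrix.trace_fin_three, Matrix.mul_apply, Fin.sum_univ_three, Matrix.vecHead, Matrix.vecTail] <;> (first | ring1 | linear_combination ((-1:F)) * hi | linear_combination ((1:F)) * hi)
  have t_R1s_T1_T2 : ((!![1,0,i;0,0,0;i,0,2] : Matrix (Fin 3) (Fin 3) F) * !![1, i, 0; i, -1, 0; 0, 0, 0] * !![1, -i, 0; -i, -1, 0; 0, 0, 0]).trace = ((2:F)) := by
    simp [Matrix.trace_fin_three, Matrix.mul_apply, Fin.sum_univ_three, Matrix.vecHead, Matrix.vecTail] <;> (first | ring1 | linear_combination ((-1:F)) * hi | linear_combination ((1:F)) * hi)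
  have t_R1_T2 : ((!![0, 1, 0; 1, 0, i; 0, i, 0] : Matrix (Fin 3) (Fin 3) F) * !![1, -i, 0; -i, -1, 0; 0, 0, 0]).trace = ((1)*i) := by
    simp [Matrix.trace_fin_three, Matrix.mul_apply, Fin.sum_univ_three, Matrix.vecHead, Matrix.vecTail] <;> (first | ring1 | linear_combination ((-1)*i) * h3 | linear_combination ((1)*i) * h3)
  have t_R1_T1 : ((!![0, 1, 0; 1, 0, i; 0, i, 0] : Matrix (Fin 3) (Fin 3) F) * !![1, i, 0; i, -1, 0; 0, 0, 0]).trace = ((2)*i) := by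
    simp [Matrix.trace_fin_three, Matrix.mul_apply, Fin.sum_univ_three, Matrix.vecHead, Matrix.vecTail] <;> (first | ring1 | ring_nf)
  have t_R1s_T2 : ((!![1,0,i;0,0,0;i,0,2] : Matrix (Fin 3) (Fin 3) F) * !![1, -i, 0; -i, -1, 0; 0, 0, 0]).trace = ((1:F)) := by
    simp [Matrix.trace_fin_three, Matrix.mul_apply, Fin.sum_univ_three, Matrix.vecHead, Matrix.vecTail] <;> (first | ring1 | ring_nf)
  have t_R1s_T1 : ((!![1,0,i;0,0,0;i,0,2] : Matrix (Fin 3) (Fin 3) F) * !![1, i, 0; i, -1, 0; 0, 0, 0]).trace = ((1:F)) := by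
    simp [Matrix.trace_fin_three, Matrix.mul_apply, Fin.sum_univ_three, Matrix.vecHead, Matrix.vecTail] <;> (first | ring1 | ring_nf)
  have t_R1_T1_T2 : ((!![0, 1, 0; 1, 0, i; 0, i, 0] : Matrix (Fin 3) (Fin 3) F) * !![1, i, 0; i, -1, 0; 0, 0, 0] * !![1, -i, 0; -i, -1, 0; 0, 0, 0]).trace = (0:F) := by
    simp [Matrix.trace_fin_three, Matrix.mul_apply, Fin.sum_univ_three, Matrix.vecHead, Matrix.vecTail] <;> (first | ring1 | ring_nf)
  have t_T1_R1 : ((!![1, i, 0; i, -1, 0; 0, 0, 0] : Matrix (Fin 3) (Fin 3) F) * !![0, 1, 0; 1, 0, i; 0, i, 0]).trace = ((2)*i) := by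
    simp [Matrix.trace_fin_three, Matrix.mul_apply, Fin.sum_univ_three, Matrix.vecHead, Matrix.vecTail] <;> (first | ring1 | ring_nf)
  have t_T1_R1_T2 : ((!![1, i, 0; i, -1, 0; 0, 0, 0] : Matrix (Fin 3) (Fin 3) F) * !![0, 1, 0; 1, 0, i; 0, i, 0] * !![1, -i, 0; -i, -1, 0; 0, 0, 0]).trace = (0:F) := by
    simp [Matrix.trace_fin_three, Matrix.mul_apply, Fin.sum_univ_three, Matrix.vecHead, Matrix.vecTail] <;> (first | ring1 | ring_nf)
  have t_T2_R1 : ((!![1, -i, 0; -i, -1, 0; 0, 0, 0] : Matrix (Fin 3) (Fin 3) F) * !![0, 1, 0; 1, 0, i; 0, i, 0]).trace = ((1)*i) := by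
    simp [Matrix.trace_fin_three, Matrix.mul_apply, Fin.sum_univ_three, Matrix.vecHead, Matrix.vecTail] <;> (first | ring1 | linear_combination ((-1)*i) * h3 | linear_combination ((1)*i) * h3)
  have t_T1_T2_R1 : ((!![1, i, 0; i, -1, 0; 0, 0, 0] : Matrix (Fin 3) (Fin 3) F) * !![1, -i, 0; -i, -1, 0; 0, 0, 0] * !![0, 1, 0; 1, 0, i; 0, i, 0]).trace = (0:F) := by
    simp [Matrix.trace_fin_three, Matrix.mul_apply, Fin.sum_univ_three, Matrix.vecHead, Matrix.vecTail] <;> (first | ring1 | ring_nf)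
  have t_R1s_T1_R2 : ((!![1,0,i;0,0,0;i,0,2] : Matrix (Fin 3) (Fin 3) F) * !![1, i, 0; i, -1, 0; 0, 0, 0] * !![1, 1, 0; 1, -3, 2 * i * s; 0, 2 * i * s, 2]).trace = ((1:F) + (1)*i + (1)*i*s) := by
    simp [Matrix.trace_fin_three, Matrix.mul_apply, Fin.sum_univ_three, Matrix.vecHead, Matrix.vecTail] <;> (first | ring1 | linear_combination ((2)*i*s) * hi + ((-1)*i*s) * h3 | linear_combination ((-2)*i*s) * hi + ((1)*i*s) * h3)
  have t_T1_R2 : ((!![1, i, 0; i, -1, 0; 0, 0, 0] : Matrix (Fin 3) (Fin 3) F) * !![1, 1, 0; 1, -3, 2 * i * s; 0, 2 * i * s, 2]).trace = ((1:F) + (2)*i) := by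
    simp [Matrix.trace_fin_three, Matrix.mul_apply, Fin.sum_univ_three, Matrix.vecHead, Matrix.vecTail] <;> (first | ring1 | linear_combination ((1:F)) * h3 | linear_combination ((-1:F)) * h3)
  have t_R1_R2 : ((!![0, 1, 0; 1, 0, i; 0, i, 0] : Matrix (Fin 3) (Fin 3) F) * !![1, 1, 0; 1, -3, 2 * i * s; 0, 2 * i * s, 2]).trace = ((2:F) + (2)*s) := by
    simp [Matrix.trace_fin_three, Matrix.mul_apply, Fin.sum_univ_three, Matrix.vecHead, Matrix.vecTail] <;> (first | ring1 | linear_combination ((4)*s) * hi + ((-2)*s) * h3 | linear_combination ((-4)*s) * hi + ((2)*s) * h3)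
  have t_R2s_R1_T1 : ((!![2,1,2*i*s;1,2,i*s;2*i*s,i*s,2] : Matrix (Fin 3) (Fin 3) F) * !![0, 1, 0; 1, 0, i; 0, i, 0] * !![1, i, 0; i, -1, 0; 0, 0, 0]).trace = ((1)*s + (1)*i + (1)*i*s) := by
    simp [Matrix.trace_fin_three, Matrix.mul_apply, Fin.sum_univ_three, Matrix.vecHead, Matrix.vecTail] <;> (first | ring1 | linear_combination ((-1)*s + (2)*i*s) * hi + ((1)*i + (-1)*i*s) * h3 | linear_combination ((1)*s + (-2)*i*s) * hi + ((-1)*i + (1)*i*s) * h3)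
  have t_R1s_R2 : ((!![1,0,i;0,0,0;i,0,2] : Matrix (Fin 3) (Fin 3) F) * !![1, 1, 0; 1, -3, 2 * i * s; 0, 2 * i * s, 2]).trace = ((2:F)) := by
    simp [Matrix.trace_fin_three, Matrix.mul_apply, Fin.sum_univ_three, Matrix.vecHead, Matrix.vecTail] <;> (first | ring1 | linear_combination ((1:F)) * h3 | linear_combination ((-1:F)) * h3)
  have t_R2s_T1 : ((!![2,1,2*i*s;1,2,i*s;2*i*s,i*s,2] : Matrix (Fin 3) (Fin 3) F) * !![1, i, 0; i, -1, 0; 0, 0, 0]).trace = ((2)*i) := by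
    simp [Matrix.trace_fin_three, Matrix.mul_apply, Fin.sum_univ_three, Matrix.vecHead, Matrix.vecTail] <;> (first | ring1 | ring_nf)
  have t_R2s_R1 : ((!![2,1,2*i*s;1,2,i*s;2*i*s,i*s,2] : Matrix (Fin 3) (Fin 3) F) * !![0, 1, 0; 1, 0, i; 0, i, 0]).trace = ((2:F) + (1)*s) := by
    simp [Matrix.trace_fin_three, Matrix.mul_apply, Fin.sum_univ_three, Matrix.vecHead, Matrix.vecTail] <;> (first | ring1 | linear_combination ((2)*s) * hi + ((-1)*s) * h3 | linear_combination ((-2)*s) * hi + ((1)*s) * h3)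
  have t_R1_T1_R2 : ((!![0, 1, 0; 1, 0, i; 0, i, 0] : Matrix (Fin 3) (Fin 3) F) * !![1, i, 0; i, -1, 0; 0, 0, 0] * !![1, 1, 0; 1, -3, 2 * i * s; 0, 2 * i * s, 2]).trace = ((2)*s + (1)*i) := by
    simp [Matrix.trace_fin_three, Matrix.mul_apply, Fin.sum_univ_three, Matrix.vecHead, Matrix.vecTail] <;> (first | ring1 | linear_combination ((-2)*s) * hi + ((-1)*i) * h3 | linear_combination ((2)*s) * hi + ((1)*i) * h3)
  have t_R1s_R2s_R3s : ((!![1,0,i;0,0,0;i,0,2] : Matrix (Fin 3) (Fin 3) F) * !![2,1,2*i*s;1,2,i*s;2*i*s,i*s,2] * !![1,0,2*i;0,0,0;2*i,0,2]).trace = ((2:F)) := by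
    simp [Matrix.trace_fin_three, Matrix.mul_apply, Fin.sum_univ_three, Matrix.vecHead, Matrix.vecTail] <;> (first | ring1 | linear_combination ((8:F) + (18)*s) * hi + ((-6)*s) * h3 | linear_combination ((-8:F) + (-18)*s) * hi + ((6)*s) * h3)
  have t_R1s_R2_R3 : ((!![1,0,i;0,0,0;i,0,2] : Matrix (Fin 3) (Fin 3) F) * !![1, 1, 0; 1, -3, 2 * i * s; 0, 2 * i * s, 2] * !![0, -1, 0; -1, 0, i; 0, i, 0]).trace = ((1:F) + (1)*s) := by
    simp [Matrix.trace_fin_three, Matrix.mul_apply, Fin.sum_univ_three, Matrix.vecHead, Matrix.vecTail] <;> (first | ring1 | linear_combination ((1:F) + (2)*s) * hi + ((-1:F) + (-1)*s) * h3 | linear_combination ((-1:F) + (-2)*s) * hi + ((1:F) + (1)*s) * h3)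
  have t_R2_R3 : ((!![1, 1, 0; 1, -3, 2 * i * s; 0, 2 * i * s, 2] : Matrix (Fin 3) (Fin 3) F) * !![0, -1, 0; -1, 0, i; 0, i, 0]).trace = ((1:F) + (2)*s) := by
    simp [Matrix.trace_fin_three, Matrix.mul_apply, Fin.sum_univ_three, Matrix.vecHead, Matrix.vecTail] <;> (first | ring1 | linear_combination ((4)*s) * hi + ((-1:F) + (-2)*s) * h3 | linear_combination ((-4)*s) * hi + ((1:F) + (2)*s) * h3)
  have t_R2s_R1_R3 : ((!![2,1,2*i*s;1,2,i*s;2*i*s,i*s,2] : Matrix (Fin 3) (Fin 3) F) * !![0, 1, 0; 1, 0, i; 0, i, 0] * !![0, -1, 0; -1, 0, i; 0, i, 0]).trace = ((1:F)) := by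
    simp [Matrix.trace_fin_three, Matrix.mul_apply, Fin.sum_univ_three, Matrix.vecHead, Matrix.vecTail] <;> (first | ring1 | linear_combination ((4:F)) * hi + ((-3:F)) * h3 | linear_combination ((-4:F)) * hi + ((3:F)) * h3)
  have t_R1_R3 : ((!![0, 1, 0; 1, 0, i; 0, i, 0] : Matrix (Fin 3) (Fin 3) F) * !![0, -1, 0; -1, 0, i; 0, i, 0]).trace = ((2:F)) := by
    simp [Matrix.trace_fin_three, Matrix.mul_apply, Fin.sum_univ_three, Matrix.vecHead, Matrix.vecTail] <;> (first | ring1 | linear_combination ((2:F)) * hi + ((-2:F)) * h3 | linear_combination ((-2:F)) * hi + ((2:F)) * h3)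
  have t_R3s_R1_R2 : ((!![1,0,2*i;0,0,0;2*i,0,2] : Matrix (Fin 3) (Fin 3) F) * !![0, 1, 0; 1, 0, i; 0, i, 0] * !![1, 1, 0; 1, -3, 2 * i * s; 0, 2 * i * s, 2]).trace = ((2:F) + (1)*s) := by
    simp [Matrix.trace_fin_three, Matrix.mul_apply, Fin.sum_univ_three, Matrix.vecHead, Matrix.vecTail] <;> (first | ring1 | linear_combination ((2:F) + (8)*s) * hi + ((-1:F) + (-3)*s) * h3 | linear_combination ((-2:F) + (-8)*s) * hi + ((1:F) + (3)*s) * h3)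
  have t_R1s_R3 : ((!![1,0,i;0,0,0;i,0,2] : Matrix (Fin 3) (Fin 3) F) * !![0, -1, 0; -1, 0, i; 0, i, 0]).trace = (0:F) := by
    simp [Matrix.trace_fin_three, Matrix.mul_apply, Fin.sum_univ_three, Matrix.vecHead, Matrix.vecTail] <;> (first | ring1 | ring_nf)
  have t_R2s_R3 : ((!![2,1,2*i*s;1,2,i*s;2*i*s,i*s,2] : Matrix (Fin 3) (Fin 3) F) * !![0, -1, 0; -1, 0, i; 0, i, 0]).trace = ((1:F) + (1)*s) := by
    simp [Matrix.trace_fin_three, Matrix.mul_apply, Fin.sum_univ_three, Matrix.vecHead, Matrix.vecTail] <;> (first | ring1 | linear_combination ((2)*s) * hi + ((-1:F) + (-1)*s) * h3 | linear_combination ((-2)*s) * hi + ((1:F) + (1)*s) * h3)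
  have t_R3s_R2 : ((!![1,0,2*i;0,0,0;2*i,0,2] : Matrix (Fin 3) (Fin 3) F) * !![1, 1, 0; 1, -3, 2 * i * s; 0, 2 * i * s, 2]).trace = ((2:F)) := by
    simp [Matrix.trace_fin_three, Matrix.mul_apply, Fin.sum_univ_three, Matrix.vecHead, Matrix.vecTail] <;> (first | ring1 | linear_combination ((1:F)) * h3 | linear_combination ((-1:F)) * h3)
  have t_R3s_R1 : ((!![1,0,2*i;0,0,0;2*i,0,2] : Matrix (Fin 3) (Fin 3) F) * !![0, 1, 0; 1, 0, i; 0, i, 0]).trace = (0:F) := by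
    simp [Matrix.trace_fin_three, Matrix.mul_apply, Fin.sum_univ_three, Matrix.vecHead, Matrix.vecTail] <;> (first | ring1 | ring_nf)
  have t_R1_R2_R3 : ((!![0, 1, 0; 1, 0, i; 0, i, 0] : Matrix (Fin 3) (Fin 3) F) * !![1, 1, 0; 1, -3, 2 * i * s; 0, 2 * i * s, 2] * !![0, -1, 0; -1, 0, i; 0, i, 0]).trace = (0:F) := by
    simp [Matrix.trace_fin_three, Matrix.mul_apply, Fin.sum_univ_three, Matrix.vecHead, Matrix.vecTail] <;> (first | ring1 | linear_combination ((-1:F)) * hi + ((1:F)) * h3 | linear_combination ((1:F)) * hi + ((-1:F)) * h3)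
  have e1 := h _ _ _ (Or.inl rfl)
  have e2 := h _ _ _ (Or.inr (Or.inl rfl))
  have e3 := h _ _ _ (Or.inr (Or.inr (Or.inl rfl)))
  have e4 := h _ _ _ (Or.inr (Or.inr (Or.inr (Or.inl rfl))))
  have e6 := h _ _ _ (Or.inr (Or.inr (Or.inr (Or.inr (Or.inr (Or.inl rfl))))))
  have e8 := h _ _ _ (Or.inr (Or.inr (Or.inr (Or.inr (Or.inr (Or.inr (Or.inr rfl)))))))
  rw [sqT1, sqT2, sqT3] at e1
  rw [sqR1, sqT1, sqT2] at e2
  rw [sqT1, sqR1, sqT2] at e3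
  rw [sqT1, sqT2, sqR1] at e4
  rw [sqR1, sqT1, sqR2] at e6
  rw [sqR1, sqR2, sqR3] at e8
  simp only [t_T1_T2, t_T1_T2_T3, t_T1_T3, t_T2_T3, Matrix.zero_mul, Matrix.mul_zero, Matrix.trace_zero, zero_mul, mul_zero, zero_add, add_zero] at e1
  simp only [t_R1_T1, t_R1_T1_T2, t_R1_T2, t_R1s_T1, t_R1s_T1_T2, t_R1s_T2, t_T1_T2, Matrix.zero_mul, Matrix.mul_zero, Matrix.trace_zero, zero_mul, mul_zero, zero_add, add_zero] at e2
  simp only [t_R1_T2, t_R1s_T1, t_R1s_T1_T2, t_R1s_T2, t_T1_R1, t_T1_R1_T2, t_T1_T2, Matrix.zero_mul, Matrix.mul_zero, Matrix.trace_zero, zero_mul, mul_zero, zero_add, add_zero] at e3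
  simp only [t_R1s_T1, t_R1s_T1_T2, t_R1s_T2, t_T1_R1, t_T1_T2, t_T1_T2_R1, t_T2_R1, Matrix.zero_mul, Matrix.mul_zero, Matrix.trace_zero, zero_mul, mul_zero, zero_add, add_zero] at e4
  simp only [t_R1_R2, t_R1_T1, t_R1_T1_R2, t_R1s_R2, t_R1s_T1, t_R1s_T1_R2, t_R2s_R1, t_R2s_R1_T1, t_R2s_T1, t_T1_R2, Matrix.zero_mul, Matrix.mul_zero, Matrix.trace_zero, zero_mul, mul_zero, zero_add, add_zero] at e6
  simp only [t_R1_R2, t_R1_R2_R3, t_R1_R3, t_R1s_R2, t_R1s_R2_R3, t_R1s_R2s_R3s, t_R1s_R3, t_R2_R3, t_R2s_R1, t_R2s_R1_R3, t_R2s_R3, t_R3s_R1, t_R3s_R1_R2, t_R3s_R2, Matrix.zero_mul, Matrix.mul_zero, Matrix.trace_zero, zero_mul, mul_zero, zero_add, add_zero] at e8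
  have h2 : (2:F) = 0 := by
    linear_combination (norm := ring1)
      ((2)*s + (1)*i) * e1 +
      ((2:F) + (1)*s + (1)*i + (2)*i*s) * e2 +
      ((2:F)) * e3 +
      ((2:F) + (2)*s + (2)*i + (2)*i*s) * e4 +
      ((2)*i) * e6 +
      ((1:F)) * e8 +
      ((20)*δ + (4)*β2 + (6)*α1 + (14)*s*δ + (8)*s*γ + (4)*s*α3 + (2)*s*α1 + (22)*i*δ + (2)*i*γ + (4)*i*α3 + (4)*i*α1 + (24)*i*s*δ + (4)*i*s*α3 + (4)*i*s*α1) * hi +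
      ((8)*δ + (2)*α3 + (2)*α1 + (8)*i*γ) * hs +
      ((4)*α3 + (2)*α2 + (1)*α1 + (2)*s*α3 + (1)*s*α1 + (-7)*i*δ + (6)*i*γ + (-8)*i*s*δ) * h3
  exact one_ne_zero (α := F) (by linear_combination h3 - h2)
end

section
/- Let F be a field of characteristic ≠ 2, and let A1 = [[1,0,0],[0,1,0],[0,0,-2]], B1 = −A1, A2 = B2 = 0 (3×3 symmetric). Then tr(A1) = tr(B1), σ2(A1) = σ2(B1), all mixed invariants tr(A1A2), tr(A1²A2), tr(A1A2²), tr(A1²A2²) and tr(A2), σ2(A2), det(A2) agree for the two pairs, but det(A1) ≠ det(B1). -/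
theorem stmt_18 (F : Type*) [Field F] (hchar : ringChar F ≠ 2)
    (A1 A2 B1 B2 : Matrix (Fin 3) (Fin 3) F)
    (hA1 : A1 = !![1, 0, 0; 0, 1, 0; 0, 0, -2])
    (hB1 : B1 = -(!![1, 0, 0; 0, 1, 0; 0, 0, -2] : Matrix (Fin 3) (Fin 3) F))
    (hA2 : A2 = 0) (hB2 : B2 = 0) :
    A1.trace = B1.trace ∧ sigma2 A1 = sigma2 B1 ∧
    A2.trace = B2.trace ∧ sigma2 A2 = sigma2 B2 ∧ A2.det = B2.det ∧
    (A1 * A2).trace = (B1 * B2).trace ∧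
    (A1 ^ 2 * A2).trace = (B1 ^ 2 * B2).trace ∧
    (A1 * A2 ^ 2).trace = (B1 * B2 ^ 2).trace ∧
    (A1 ^ 2 * A2 ^ 2).trace = (B1 ^ 2 * B2 ^ 2).trace ∧
    A1.det ≠ B1.det := by
  have h2 : (2 : F) ≠ 0 := by
    simpa using Ring.two_ne_zero (by simpa [ringChar.spec] using hchar)
  subst hA1 hB1 hA2 hB2
  refine ⟨?_, ?_, ?_, ?_, ?_, ?_, ?_, ?_, ?_, ?_⟩ <;>
    simp [sigma2, Matrix.trace_fin_three, Matrix.det_fin_three, Matrix.neg_apply] <;>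
    first | (intro h; exact mul_ne_zero h2 h2 (by linear_combination -h)) | ring
end
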